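/- The minimum of the relaxed complementarity problem (minimize Σᵢ uᵢ subject to sᵢ - aᵢᵀθ + bᵢ ≥ 0, uᵢ(sᵢ - aᵢᵀθ + bᵢ) = 0, sᵢ(1 - uᵢ) = 0, 0 ≤ uᵢ ≤ 1, sᵢ ≥ 0) equals the minimum over θ ∈ ℝ^d of the number of indices i with aᵢᵀθ - bᵢ > 0. -/
import Mathlib


open Finset in
theorem relaxed_complementarity_exact
    (M d : ℕ) (a : Fin M → Fin d → ℝ) (b : Fin M → ℝ) :
    sInf {t : ℝ | ∃ (u s : Fin M → ℝ) (θ : Fin d → ℝ),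
        (∀ i, s i - (∑ k, a i k * θ k) + b i ≥ 0) ∧
        (∀ i, u i * (s i - (∑ k, a i k * θ k) + b i) = 0) ∧
        (∀ i, s i * (1 - u i) = 0) ∧
        (∀ i, 0 ≤ u i ∧ u i ≤ 1) ∧
        (∀ i, s i ≥ 0) ∧
        t = ∑ i, u i}
      = sInf {t : ℝ | ∃ θ : Fin d → ℝ,
          t = ({i : Fin M | (∑ k, a i k * θ k) - b i > 0}.ncard : ℝ)} := by
  set L := {t : ℝ | ∃ (u s : Fin M → ℝ) (θ : Fin d → ℝ),
        (∀ i, s i - (∑ k, a i k * θ k) + b i ≥ 0) ∧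
        (∀ i, u i * (s i - (∑ k, a i k * θ k) + b i) = 0) ∧
        (∀ i, s i * (1 - u i) = 0) ∧
        (∀ i, 0 ≤ u i ∧ u i ≤ 1) ∧
        (∀ i, s i ≥ 0) ∧
        t = ∑ i, u i} with hL
  set R := {t : ℝ | ∃ θ : Fin d → ℝ,
          t = ({i : Fin M | (∑ k, a i k * θ k) - b i > 0}.ncard : ℝ)} with hR
  -- ncard as a filter card
  have hcard : ∀ θ : Fin d → ℝ,
      ({i : Fin M | (∑ k, a i k * θ k) - b i > 0}.ncard : ℝ)
      = ∑ i, (if (∑ k, a i k * θ k) - b i > 0 then (1:ℝ) else 0) := by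
    intro θ
    rw [Finset.sum_ite, Finset.sum_const, Finset.sum_const, smul_zero, add_zero,
      nsmul_eq_mul, mul_one, Set.ncard_eq_toFinset_card']
    congr 2
    ext i
    simp
  -- R ⊆ L
  have hRL : R ⊆ L := by
    rintro t ⟨θ, rfl⟩
    refine ⟨fun i => if (∑ k, a i k * θ k) - b i > 0 then 1 else 0,
      fun i => if (∑ k, a i k * θ k) - b i > 0 then (∑ k, a i k * θ k) - b i else 0,
      θ, ?_, ?_, ?_, ?_, ?_, ?_⟩
    · intro i
      by_cases h : (∑ k, a i k * θ k) - b i > 0 <;> simp [h] <;> linarith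
    · intro i
      by_cases h : (∑ k, a i k * θ k) - b i > 0 <;> simp [h] <;> linarith
    · intro i
      by_cases h : (∑ k, a i k * θ k) - b i > 0 <;> simp [h]
    · intro i
      by_cases h : (∑ k, a i k * θ k) - b i > 0 <;> simp [h]
    · intro i
      by_cases h : (∑ k, a i k * θ k) - b i > 0 <;> simp [h] <;> linarith
    · exact hcard θ
  have hRne : R.Nonempty := ⟨_, ⟨fun _ => 0, rfl⟩⟩
  have hLne : L.Nonempty := ⟨_, hRL hRne.choose_spec⟩
  have hLbdd : BddBelow L := by
    refine ⟨0, ?_⟩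
    rintro t ⟨u, s, θ, h1, h2, h3, h4, h5, rfl⟩
    exact Finset.sum_nonneg fun i _ => (h4 i).1
  have hRbdd : BddBelow R := by
    refine ⟨0, ?_⟩
    rintro t ⟨θ, rfl⟩
    positivity
  apply le_antisymm
  · exact csInf_le_csInf hLbdd hRne hRL
  · refine le_csInf hLne ?_
    rintro t ⟨u, s, θ, h1, h2, h3, h4, h5, rfl⟩
    refine le_trans (csInf_le hRbdd ⟨θ, rfl⟩) ?_
    rw [hcard θ]
    apply Finset.sum_le_sum
    intro i _
    by_cases h : (∑ k, a i k * θ k) - b i > 0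
    · simp only [h, if_true]
      have hs : s i > 0 := by have := h1 i; linarith
      have : 1 - u i = 0 := by
        have := h3 i
        rcases mul_eq_zero.1 this with h' | h'
        · linarith
        · exact h'
      linarith
    · simp only [h, if_false]
      exact (h4 i).1
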